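/- For each d ≥ 2 there exists a constant c > 0 such that for all y ≥ 0, both (1 − J_∞^d(y))² ≥ c · (2 − 2 J_∞^d(y) − d ((J_∞^d)'(y))²) and (1 + J_∞^d(y))² ≥ c · (2 + 2 J_∞^d(y) − d ((J_∞^d)'(y))²) hold. Equivalently, the infima over y ∈ (0, ∞) of (1 ∓ J_∞^d(y)) / √(2 ∓ 2 J_∞^d(y) − d ((J_∞^d)'(y))²) are both strictly positive. -/

import Mathlib

/-!
Write `J(y) = g(y²)`, where `g(x) = Σⱼ bⱼ xʲ` with `bⱼ = (-1)ʲ Γ(d/2) / (4ʲ j! Γ(j + d/2))` is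
entire and satisfies the Bessel equation `g + 2d g' + 4x g'' = 0`, so that `J'(y) = 2y g'(y²)`.

Near the origin, geometric tail bounds give `g(x) = 1 - x/(2d) + O(x²)` and
`g'(x) = -1/(2d) + O(x)`. Hence `1 - J ≍ y²`, while in `2 - 2J - d J'²` the terms of order `y²`
cancel, leaving `O(y⁴)`; and `J ≥ 0` there.

Away from the origin the energy `J² + J'²` is non-increasing (its derivative is
`-8(d-1) t g'(t²)²`), and its value at `t = 1` is below `1 - 1/(8d)`. So `|J| ≤ 1 - 1/(16d)` for
`y ≥ 1`, where both `(1 ∓ J)²` dominate a fixed multiple of `2 ∓ 2J`.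
-/

open Real

/-- The normalized Bessel function
`J_∞^d(y) = Σ_{j≥0} (−1)^j Γ(d/2)/(j! Γ(j+d/2)) (y/2)^{2j}`. -/
noncomputable def besselJdim (d : ℕ) (y : ℝ) : ℝ :=
  ∑' j : ℕ, (-1) ^ j * Real.Gamma ((d : ℝ) / 2) /
      ((j.factorial : ℝ) * Real.Gamma ((j : ℝ) + (d : ℝ) / 2)) * (y / 2) ^ (2 * j)

open FormalMultilinearSeries

section PowerSeries

variable {𝕜 : Type*} [NontriviallyNormedField 𝕜]

def derivCoeff (a : ℕ → 𝕜) (n : ℕ) : 𝕜 := (n + 1) * a (n + 1)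

theorem coeff_derivSeries_ofScalars (a : ℕ → 𝕜) (n : ℕ) :
    (ofScalars 𝕜 a).derivSeries.coeff n 1 = derivCoeff a n := by
  simp [derivCoeff, nsmul_eq_mul]

theorem radius_ofScalars_le_radius_ofScalars_derivCoeff (a : ℕ → 𝕜) :
    (ofScalars 𝕜 a).radius ≤ (ofScalars 𝕜 (derivCoeff a)).radius := by
  refine (radius_le_radius_derivSeries _).trans (radius_le_of_le fun n => ?_)
  rw [ofScalars_norm, norm_apply_eq_norm_coef, ← coeff_derivSeries_ofScalars]
  simpa using ((ofScalars 𝕜 a).derivSeries.coeff n).le_opNorm 1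

theorem hasDerivAt_ofScalarsSum [CompleteSpace 𝕜] {a : ℕ → 𝕜}
    (ha : (ofScalars 𝕜 a).radius = ⊤) (x : 𝕜) :
    HasDerivAt (ofScalarsSum a) (ofScalarsSum (derivCoeff a) x) x := by
  have hx : ‖x‖ₑ < (ofScalars 𝕜 a).derivSeries.radius :=
    (radius_le_radius_derivSeries _).trans_lt' (by simp [ha])
  have hsum := ((ofScalars 𝕜 a).derivSeries.hasSum (by simpa using hx)).mapL
    (ContinuousLinearMap.apply 𝕜 𝕜 (1 : 𝕜))
  have hterm : (fun n => ContinuousLinearMap.apply 𝕜 𝕜 (1 : 𝕜)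
      ((ofScalars 𝕜 a).derivSeries n fun _ => x)) = fun n => derivCoeff a n • x ^ n := by
    ext n
    simp [derivCoeff, mul_comm]
  rw [hterm] at hsum
  have hderiv : HasDerivAt (ofScalarsSum a) ((ofScalars 𝕜 a).derivSeries.sum x 1) x :=
    ((ofScalars 𝕜 a).hasFDerivAt_sum (by simp [ha])).hasDerivAt
  exact hderiv.congr_deriv (hsum.tsum_eq.symm.trans (ofScalars_sum_eq _ _).symm)

theorem radius_ofScalars_derivCoeff_eq_top {a : ℕ → 𝕜} (ha : (ofScalars 𝕜 a).radius = ⊤) :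
    (ofScalars 𝕜 (derivCoeff a)).radius = ⊤ :=
  top_le_iff.1 (ha.ge.trans (radius_ofScalars_le_radius_ofScalars_derivCoeff a))

theorem deriv_ofScalarsSum [CompleteSpace 𝕜] {a : ℕ → 𝕜} (ha : (ofScalars 𝕜 a).radius = ⊤) :
    deriv (ofScalarsSum (E := 𝕜) a) = ofScalarsSum (derivCoeff a) :=
  funext fun x => (hasDerivAt_ofScalarsSum ha x).deriv

theorem hasSum_ofScalarsSum [CompleteSpace 𝕜] {a : ℕ → 𝕜} (ha : (ofScalars 𝕜 a).radius = ⊤)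
    (x : 𝕜) : HasSum (fun n => a n * x ^ n) (ofScalarsSum a x) := by
  simpa [ofScalarsSum, ofScalars_apply_eq, mul_comm] using
    (ofScalars 𝕜 a).hasSum (x := x) (by simp [ha])

end PowerSeries

theorem HasSum.norm_le_of_norm_succ_le {E : Type*} [NormedAddCommGroup E] {u : ℕ → E}
    {S : E} {r : ℝ} (h : HasSum u S) (hr0 : 0 ≤ r) (hr1 : r < 1)
    (hu : ∀ n, ‖u (n + 1)‖ ≤ r * ‖u n‖) : ‖S‖ ≤ ‖u 0‖ / (1 - r) := by
  have hgeom : ∀ n, ‖u n‖ ≤ ‖u 0‖ * r ^ n := by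
    intro n
    induction n with
    | zero => simp
    | succ n ih =>
      calc ‖u (n + 1)‖ ≤ r * ‖u n‖ := hu n
        _ ≤ r * (‖u 0‖ * r ^ n) := by gcongr
        _ = ‖u 0‖ * r ^ (n + 1) := by ring
  have := tsum_of_norm_bounded ((hasSum_geometric_of_lt_one hr0 hr1).mul_left ‖u 0‖) hgeom
  rwa [h.tsum_eq, ← div_eq_mul_inv] at this

theorem abs_sub_sum_range_le_of_abs_succ_le {a : ℕ → ℝ} {x S r : ℝ} (k : ℕ)
    (h : HasSum (fun n => a n * x ^ n) S) (hx0 : 0 ≤ x) (hx1 : x ≤ 1) (hr0 : 0 ≤ r)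
    (hr1 : r < 1) (ha : ∀ n, k ≤ n → |a (n + 1)| ≤ r * |a n|) :
    |S - ∑ i ∈ Finset.range k, a i * x ^ i| ≤ |a k| * x ^ k / (1 - r) := by
  have htail := (hasSum_nat_add_iff' k).mpr h
  have hstep : ∀ n, ‖a (n + 1 + k) * x ^ (n + 1 + k)‖ ≤ r * ‖a (n + k) * x ^ (n + k)‖ := by
    intro n
    simp only [norm_mul, norm_pow, Real.norm_eq_abs, abs_of_nonneg hx0]
    rw [add_right_comm, pow_succ]
    have hx : x ^ (n + k) * x ≤ x ^ (n + k) := mul_le_of_le_one_right (by positivity) hx1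
    calc |a (n + k + 1)| * (x ^ (n + k) * x) ≤ (r * |a (n + k)|) * x ^ (n + k) :=
          mul_le_mul (ha _ (Nat.le_add_left k n)) hx (by positivity) (by positivity)
      _ = r * (|a (n + k)| * x ^ (n + k)) := by ring
  simpa [abs_mul, abs_of_nonneg hx0] using htail.norm_le_of_norm_succ_le hr0 hr1 hstep

theorem hasDerivAt_sq_comp {𝕜 : Type*} [NontriviallyNormedField 𝕜] {f : 𝕜 → 𝕜}
    (hf : Differentiable 𝕜 f) (t : 𝕜) :
    HasDerivAt (fun s => f (s ^ 2)) (2 * t * deriv f (t ^ 2)) t := by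
  have hsq : HasDerivAt (fun s : 𝕜 => s ^ 2) (2 * t) t := by simpa using hasDerivAt_pow 2 t
  exact ((hf (t ^ 2)).hasDerivAt.comp t hsq).congr_deriv (mul_comm _ _)

noncomputable def besselCoeff (d j : ℕ) : ℝ :=
  (-1) ^ j * Gamma (d / 2) / (4 ^ j * j.factorial * Gamma (j + d / 2))

noncomputable def besselSeries (d : ℕ) : ℝ → ℝ := ofScalarsSum (besselCoeff d)

theorem besselJdim_eq_besselSeries (d : ℕ) (y : ℝ) :
    besselJdim d y = besselSeries d (y ^ 2) := by
  rw [besselJdim, besselSeries, ofScalars_sum_eq]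
  refine tsum_congr fun j => ?_
  rw [besselCoeff, smul_eq_mul, pow_mul, div_pow, div_pow, ← pow_mul]
  field_simp
  ring

section Bessel

variable {d : ℕ}

theorem besselCoeff_zero (hd : 0 < d) : besselCoeff d 0 = 1 := by
  have : Gamma (d / 2) ≠ 0 := (Gamma_pos_of_pos (by positivity)).ne'
  simp [besselCoeff, this]

theorem besselCoeff_succ (hd : 0 < d) (j : ℕ) :
    besselCoeff d (j + 1) = -besselCoeff d j / (2 * (j + 1) * (2 * j + d)) := by
  have hj : (j : ℝ) + d / 2 ≠ 0 := by positivity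
  have hΓ : Gamma ((j + 1 : ℕ) + d / 2) = (j + d / 2) * Gamma (j + d / 2) := by
    rw [← Gamma_add_one hj]; push_cast; ring_nf
  have hΓpos : Gamma (j + d / 2) ≠ 0 := (Gamma_pos_of_pos (by positivity)).ne'
  rw [besselCoeff, besselCoeff, hΓ, Nat.factorial_succ]
  push_cast
  field_simp
  ring

theorem besselCoeff_ne_zero (hd : 0 < d) (j : ℕ) : besselCoeff d j ≠ 0 := by
  induction j with
  | zero => simp [besselCoeff_zero hd]
  | succ j ih => rw [besselCoeff_succ hd]; exact div_ne_zero (neg_ne_zero.2 ih) (by positivity)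

theorem radius_ofScalars_besselCoeff (hd : 0 < d) :
    (ofScalars ℝ (besselCoeff d)).radius = ⊤ := by
  refine ofScalars_radius_eq_top_of_tendsto ℝ _ (.of_forall (besselCoeff_ne_zero hd)) ?_
  have hratio : ∀ n : ℕ,
      ‖besselCoeff d n.succ‖ / ‖besselCoeff d n‖ = 1 / (2 * (n + 1) * (2 * n + d)) := by
    intro n
    rw [besselCoeff_succ hd, norm_div, norm_neg,
      Real.norm_of_nonneg (by positivity : (0 : ℝ) ≤ 2 * (n + 1) * (2 * n + d)), div_right_comm,
      div_self (norm_ne_zero_iff.2 (besselCoeff_ne_zero hd n))]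
  simp_rw [hratio]
  refine squeeze_zero (fun n => by positivity) (fun n => ?_)
    tendsto_one_div_add_atTop_nhds_zero_nat
  gcongr
  nlinarith [(Nat.one_le_cast (α := ℝ)).2 hd]

theorem derivCoeff_besselCoeff (hd : 0 < d) (n : ℕ) :
    derivCoeff (besselCoeff d) n = -besselCoeff d n / (4 * n + 2 * d) := by
  rw [derivCoeff, besselCoeff_succ hd]
  field_simp
  ring

theorem derivCoeff_besselCoeff_succ (hd : 0 < d) (n : ℕ) :
    derivCoeff (besselCoeff d) (n + 1)
      = -derivCoeff (besselCoeff d) n / ((n + 1) * (4 * n + 4 + 2 * d)) := by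
  rw [derivCoeff_besselCoeff hd, derivCoeff_besselCoeff hd, besselCoeff_succ hd]
  push_cast
  field_simp
  ring

theorem besselSeries_ode (hd : 0 < d) (x : ℝ) :
    besselSeries d x + 2 * d * deriv (besselSeries d) x
      + 4 * x * deriv (deriv (besselSeries d)) x = 0 := by
  set b := besselCoeff d
  set c := derivCoeff b
  have hb : (ofScalars ℝ b).radius = ⊤ := radius_ofScalars_besselCoeff hd
  have hc : (ofScalars ℝ c).radius = ⊤ := radius_ofScalars_derivCoeff_eq_top hb
  rw [besselSeries, deriv_ofScalarsSum hb, deriv_ofScalarsSum hc]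
  have hshift : HasSum (fun n => 4 * n * c n * x ^ n)
      (4 * x * ofScalarsSum (derivCoeff c) x) := by
    refine (hasSum_nat_add_iff' 1).1 ?_
    simpa [derivCoeff, pow_succ, mul_assoc, mul_comm, mul_left_comm] using
      (hasSum_ofScalarsSum (radius_ofScalars_derivCoeff_eq_top hc) x).mul_left (4 * x)
  have hsum := ((hasSum_ofScalarsSum hb x).add
    ((hasSum_ofScalarsSum hc x).mul_left (2 * (d : ℝ)))).add hshift
  refine hsum.unique (hasSum_zero.congr_fun fun n => ?_)
  have hcoeff : b n = -(4 * n + 2 * d) * c n := by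
    simp only [c, b, derivCoeff_besselCoeff hd]
    field_simp
  rw [hcoeff]
  ring

theorem differentiable_besselSeries (hd : 0 < d) : Differentiable ℝ (besselSeries d) :=
  fun x => (hasDerivAt_ofScalarsSum (radius_ofScalars_besselCoeff hd) x).differentiableAt

theorem differentiable_deriv_besselSeries (hd : 0 < d) :
    Differentiable ℝ (deriv (besselSeries d)) := by
  have hb := radius_ofScalars_besselCoeff hd
  rw [besselSeries, deriv_ofScalarsSum hb]
  exact fun x =>
    (hasDerivAt_ofScalarsSum (radius_ofScalars_derivCoeff_eq_top hb) x).differentiableAt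

theorem hasDerivAt_besselJdim (hd : 0 < d) (y : ℝ) :
    HasDerivAt (besselJdim d) (2 * y * deriv (besselSeries d) (y ^ 2)) y := by
  rw [show besselJdim d = fun y => besselSeries d (y ^ 2) from
    funext (besselJdim_eq_besselSeries d)]
  exact hasDerivAt_sq_comp (differentiable_besselSeries hd) y

theorem abs_besselSeries_sub_le (hd : 0 < d) {x : ℝ} (hx0 : 0 ≤ x) (hx1 : x ≤ 1) :
    |besselSeries d x - (1 - x / (2 * d))| ≤ x ^ 2 / (6 * d * (d + 2)) := by
  have hratio : ∀ n, 2 ≤ n → |besselCoeff d (n + 1)| ≤ 1 / 4 * |besselCoeff d n| := by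
    intro n hn
    have hn' : (2 : ℝ) ≤ n := by exact_mod_cast hn
    rw [besselCoeff_succ hd, abs_div, abs_neg,
      abs_of_pos (by positivity : (0 : ℝ) < 2 * (n + 1) * (2 * n + d)), div_le_iff₀ (by positivity)]
    have h4 : (4 : ℝ) ≤ 2 * (n + 1) * (2 * n + d) := by nlinarith [(d.cast_nonneg : (0 : ℝ) ≤ d)]
    nlinarith [mul_le_mul_of_nonneg_left h4 (abs_nonneg (besselCoeff d n))]
  have h := abs_sub_sum_range_le_of_abs_succ_le 2
    (hasSum_ofScalarsSum (radius_ofScalars_besselCoeff hd) x) hx0 hx1 (by norm_num)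
    (by norm_num) hratio
  simp only [Finset.sum_range_succ, Finset.sum_range_zero, besselCoeff_succ hd,
    besselCoeff_zero hd] at h
  norm_num at h
  convert h using 1
  · rw [besselSeries]; ring_nf
  · simp only [neg_div, neg_neg]
    rw [abs_of_pos (by positivity)]
    field_simp
    ring

theorem abs_deriv_besselSeries_add_le (hd : 0 < d) {x : ℝ} (hx0 : 0 ≤ x) (hx1 : x ≤ 1) :
    |deriv (besselSeries d) x + 1 / (2 * d)| ≤ x / (3 * d * (d + 2)) := by
  have hratio : ∀ n, 1 ≤ n →
      |derivCoeff (besselCoeff d) (n + 1)| ≤ 1 / 4 * |derivCoeff (besselCoeff d) n| := by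
    intro n _
    rw [derivCoeff_besselCoeff_succ hd, abs_div, abs_neg,
      abs_of_pos (by positivity : (0 : ℝ) < (n + 1) * (4 * n + 4 + 2 * d)),
      div_le_iff₀ (by positivity)]
    have h4 : (4 : ℝ) ≤ (n + 1) * (4 * n + 4 + 2 * d) := by
      nlinarith [(n.cast_nonneg : (0 : ℝ) ≤ n), (d.cast_nonneg : (0 : ℝ) ≤ d)]
    nlinarith [mul_le_mul_of_nonneg_left h4 (abs_nonneg (derivCoeff (besselCoeff d) n))]
  have hb := radius_ofScalars_besselCoeff hd
  have h := abs_sub_sum_range_le_of_abs_succ_le 1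
    (hasSum_ofScalarsSum (radius_ofScalars_derivCoeff_eq_top hb) x) hx0 hx1 (by norm_num)
    (by norm_num) hratio
  rw [besselSeries, deriv_ofScalarsSum hb]
  simp only [Finset.sum_range_succ, Finset.sum_range_zero, derivCoeff_besselCoeff_succ hd,
    derivCoeff_besselCoeff hd, besselCoeff_zero hd] at h
  norm_num at h
  convert h using 1
  · ring_nf
  · simp only [neg_div, neg_neg]
    rw [abs_of_pos (by positivity)]
    field_simp
    ring

noncomputable def besselEnergy (d : ℕ) (t : ℝ) : ℝ :=
  besselJdim d t ^ 2 + deriv (besselJdim d) t ^ 2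

theorem besselEnergy_eq (hd : 0 < d) (t : ℝ) : besselEnergy d t
    = besselSeries d (t ^ 2) ^ 2 + (2 * t * deriv (besselSeries d) (t ^ 2)) ^ 2 := by
  rw [besselEnergy, (hasDerivAt_besselJdim hd t).deriv, besselJdim_eq_besselSeries]

theorem hasDerivAt_besselEnergy (hd : 0 < d) (t : ℝ) :
    HasDerivAt (besselEnergy d) (-(8 * (d - 1) * t * deriv (besselSeries d) (t ^ 2) ^ 2)) t := by
  set g := besselSeries d
  have hE : besselEnergy d = fun t => g (t ^ 2) ^ 2 + (2 * t * deriv g (t ^ 2)) ^ 2 :=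
    funext (besselEnergy_eq hd)
  have h1 := hasDerivAt_sq_comp (differentiable_besselSeries hd) t
  have h2 := ((hasDerivAt_id t).const_mul 2).mul
    (hasDerivAt_sq_comp (differentiable_deriv_besselSeries hd) t)
  rw [hE]
  refine ((h1.pow 2).add (h2.pow 2)).congr_deriv ?_
  simp only [id_eq, Pi.mul_apply]
  linear_combination (4 * t * deriv g (t ^ 2)) * besselSeries_ode hd (t ^ 2)

theorem antitoneOn_besselEnergy (hd : 1 ≤ d) : AntitoneOn (besselEnergy d) (Set.Ici 0) := by
  have hd' : (1 : ℝ) ≤ d := Nat.one_le_cast.2 hd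
  refine antitoneOn_of_hasDerivWithinAt_nonpos (convex_Ici 0)
    (fun t _ => (hasDerivAt_besselEnergy hd t).continuousAt.continuousWithinAt)
    (fun t _ => (hasDerivAt_besselEnergy hd t).hasDerivWithinAt) fun t ht => ?_
  rw [interior_Ici, Set.mem_Ioi] at ht
  have : 0 ≤ (d - 1 : ℝ) * t * deriv (besselSeries d) (t ^ 2) ^ 2 := by
    have : (0 : ℝ) ≤ d - 1 := by linarith
    positivity
  linarith

theorem one_div_two_mul_le_one_div_four (hd : 2 ≤ d) : 1 / (2 * (d : ℝ)) ≤ 1 / 4 := by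
  have hd' : (2 : ℝ) ≤ d := by exact_mod_cast hd
  rw [div_le_div_iff₀ (by positivity) (by norm_num)]
  linarith

theorem besselSeries_bounds_of_two_le (hd : 2 ≤ d) {x : ℝ} (hx0 : 0 ≤ x) (hx1 : x ≤ 1) :
    |besselSeries d x - (1 - 1 / (2 * d) * x)| ≤ 1 / (2 * d) * x ^ 2 / 12 ∧
      |deriv (besselSeries d) x + 1 / (2 * d)| ≤ 1 / (2 * d) * x / 6 := by
  have hd' : (2 : ℝ) ≤ d := by exact_mod_cast hd
  have hd0 : 0 < d := by omega
  constructor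
  · calc |besselSeries d x - (1 - 1 / (2 * d) * x)|
          = |besselSeries d x - (1 - x / (2 * d))| := by ring_nf
      _ ≤ x ^ 2 / (6 * d * (d + 2)) := abs_besselSeries_sub_le hd0 hx0 hx1
      _ ≤ x ^ 2 / (24 * d) :=
          div_le_div_of_nonneg_left (sq_nonneg x) (by positivity) (by nlinarith)
      _ = 1 / (2 * d) * x ^ 2 / 12 := by ring
  · calc |deriv (besselSeries d) x + 1 / (2 * d)| ≤ x / (3 * d * (d + 2)) :=
          abs_deriv_besselSeries_add_le hd0 hx0 hx1
      _ ≤ x / (12 * d) := div_le_div_of_nonneg_left hx0 (by positivity) (by nlinarith)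
      _ = 1 / (2 * d) * x / 6 := by ring

theorem besselEnergy_one_le (hd : 2 ≤ d) : besselEnergy d 1 ≤ 1 - 1 / (2 * d) / 4 := by
  obtain ⟨hG, hH⟩ := besselSeries_bounds_of_two_le hd zero_le_one le_rfl
  rw [besselEnergy_eq (by omega)]
  set u : ℝ := 1 / (2 * d)
  have hu0 : 0 < u := by positivity
  have hu4 : u ≤ 1 / 4 := one_div_two_mul_le_one_div_four hd
  simp only [one_pow, mul_one] at hG hH ⊢
  obtain ⟨hG₁, hG₂⟩ := abs_le.1 hG
  obtain ⟨hH₁, hH₂⟩ := abs_le.1 hH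
  have hGsq : besselSeries d 1 ^ 2 ≤ (1 - 11 * u / 12) ^ 2 :=
    pow_le_pow_left₀ (by linarith) (by linarith) 2
  have hHsq : deriv (besselSeries d) 1 ^ 2 ≤ (7 * u / 6) ^ 2 :=
    sq_le_sq' (by linarith) (by linarith)
  nlinarith

theorem abs_besselJdim_le_of_one_le (hd : 2 ≤ d) {y : ℝ} (hy : 1 ≤ y) :
    |besselJdim d y| ≤ 1 - 1 / (2 * d) / 8 := by
  have hJE : besselJdim d y ^ 2 ≤ besselEnergy d y :=
    le_add_of_nonneg_right (sq_nonneg _)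
  have hE := antitoneOn_besselEnergy (d := d) (by omega) (Set.mem_Ici.2 zero_le_one)
    (Set.mem_Ici.2 (zero_le_one.trans hy)) hy
  have hu := one_div_two_mul_le_one_div_four hd
  refine abs_le_of_sq_le_sq ?_ (by linarith)
  have hexp : (1 - 1 / (2 * (d : ℝ)) / 8) ^ 2 = 1 - 1 / (2 * d) / 4 + (1 / (2 * d) / 8) ^ 2 := by
    ring
  linarith [besselEnergy_one_le hd, sq_nonneg (1 / (2 * (d : ℝ)) / 8)]

theorem besselJdim_nonneg_of_le_one (hd : 2 ≤ d) {y : ℝ} (hy0 : 0 ≤ y) (hy1 : y ≤ 1) :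
    0 ≤ besselJdim d y := by
  have hx1 : y ^ 2 ≤ 1 := pow_le_one₀ hy0 hy1
  obtain ⟨hG, -⟩ := besselSeries_bounds_of_two_le hd (sq_nonneg y) hx1
  have hu := one_div_two_mul_le_one_div_four hd
  rw [besselJdim_eq_besselSeries]
  nlinarith [abs_le.1 hG, sq_nonneg y, pow_le_one₀ (sq_nonneg y) hx1 (n := 2)]

theorem sq_one_sub_besselJdim_ge_of_le_one (hd : 2 ≤ d) {y : ℝ} (hy0 : 0 ≤ y) (hy1 : y ≤ 1) :
    1 / (2 * d) / 16 * (2 - 2 * besselJdim d y - d * deriv (besselJdim d) y ^ 2)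
      ≤ (1 - besselJdim d y) ^ 2 := by
  have hx1 : y ^ 2 ≤ 1 := pow_le_one₀ hy0 hy1
  obtain ⟨hG, hH⟩ := besselSeries_bounds_of_two_le hd (sq_nonneg y) hx1
  rw [(hasDerivAt_besselJdim (by omega) y).deriv, besselJdim_eq_besselSeries]
  have hdu : 2 * (d : ℝ) * (1 / (2 * d)) = 1 := by field_simp
  set u : ℝ := 1 / (2 * d)
  set x := y ^ 2 with hx
  set G := besselSeries d x
  set H := deriv (besselSeries d) x
  -- the terms of order `x` cancel because `2 d u = 1`
  have hgap : 2 - 2 * G - d * (2 * y * H) ^ 2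
      = -2 * (G - (1 - u * x)) + 4 * x * (H + u) - 4 * d * x * (H + u) ^ 2 := by
    rw [mul_pow, mul_pow, ← hx]
    linear_combination (4 * x * H + 2 * u * x) * hdu
  have hu0 : 0 < u := by positivity
  have hx0 : 0 ≤ x := sq_nonneg y
  have hx2 : x ^ 2 ≤ x := by nlinarith
  obtain ⟨-, hG₂⟩ := abs_le.1 hG
  obtain ⟨-, hH₂⟩ := abs_le.1 hH
  have hgap_le : 2 - 2 * G - d * (2 * y * H) ^ 2 ≤ 5 / 6 * u * x ^ 2 := by
    have : 0 ≤ d * x * (H + u) ^ 2 := by positivity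
    rw [hgap]
    nlinarith [abs_le.1 hG, mul_le_mul_of_nonneg_left hH₂ hx0]
  have hlow : 11 / 12 * u * x ≤ 1 - G := by
    nlinarith [mul_le_mul_of_nonneg_left hx2 hu0.le]
  calc u / 16 * (2 - 2 * G - d * (2 * y * H) ^ 2) ≤ u / 16 * (5 / 6 * u * x ^ 2) := by gcongr
    _ ≤ (11 / 12 * u * x) ^ 2 := by nlinarith [sq_nonneg (u * x)]
    _ ≤ (1 - G) ^ 2 := pow_le_pow_left₀ (by positivity) hlow 2

end Bessel

theorem mul_two_mul_sub_le_sq {a c p : ℝ} (hc : 0 ≤ c) (ha : 2 * c ≤ a) (hp : 0 ≤ p) :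
    c * (2 * a - p) ≤ a ^ 2 := by
  nlinarith

/-- For each `d ≥ 2` there is `c > 0` such that for all `y ≥ 0`,
`(1 − J_∞^d(y))² ≥ c(2 − 2J_∞^d(y) − d((J_∞^d)'(y))²)` and
`(1 + J_∞^d(y))² ≥ c(2 + 2J_∞^d(y) − d((J_∞^d)'(y))²)`. -/
theorem besselJdim_ratio_infima_pos (d : ℕ) (hd : 2 ≤ d) :
    ∃ c : ℝ, 0 < c ∧ ∀ y : ℝ, 0 ≤ y →
      (1 - besselJdim d y) ^ 2 ≥
        c * (2 - 2 * besselJdim d y - d * (deriv (besselJdim d) y) ^ 2) ∧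
      (1 + besselJdim d y) ^ 2 ≥
        c * (2 + 2 * besselJdim d y - d * (deriv (besselJdim d) y) ^ 2) := by
  have hu := one_div_two_mul_le_one_div_four hd
  have hd0 : (0 : ℝ) < d := by exact_mod_cast (by omega : 0 < d)
  have hc : 0 < 1 / (2 * (d : ℝ)) / 16 := by positivity
  refine ⟨1 / (2 * d) / 16, hc, fun y hy => ?_⟩
  have hP : 0 ≤ (d : ℝ) * deriv (besselJdim d) y ^ 2 := by positivity
  rcases le_total y 1 with hy1 | hy1
  · have hJ := besselJdim_nonneg_of_le_one hd hy hy1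
    exact ⟨sq_one_sub_besselJdim_ge_of_le_one hd hy hy1,
      (mul_two_mul_sub_le_sq hc.le (by linarith) hP).trans_eq' (by ring)⟩
  · obtain ⟨hJ₁, hJ₂⟩ := abs_le.1 (abs_besselJdim_le_of_one_le hd hy1)
    exact ⟨(mul_two_mul_sub_le_sq hc.le (by linarith) hP).trans_eq' (by ring),
      (mul_two_mul_sub_le_sq hc.le (by linarith) hP).trans_eq' (by ring)⟩
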